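/- Let (X_i)_{i∈ℤ} be a strictly stationary real sequence with ‖X_0‖_r = (E|X_0|^r)^{1/r} < ∞ for some r > 4, α-mixing with coefficients (α(q)). Then there exists a constant c > 0, depending only on ‖X_0‖_r and r, such that for all integers p ≥ 1, q ≥ 1 and all finite intervals I, J ⊂ ℤ with #I ≤ p, #J ≤ p and dist(I,J) ≥ q: |Cov(G_I², G_J²)| ≤ c p² α(q)^{(r−4)/r}. -/

import Mathlib

open MeasureTheory ProbabilityTheory Filter Topology

noncomputable section

variable {Ω : Type*} [MeasurableSpace Ω]

/-- Covariance of two real-valued random variables. -/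
def cov (P : Measure Ω) (f g : Ω → ℝ) : ℝ :=
  (∫ ω, f ω * g ω ∂P) - (∫ ω, f ω ∂P) * (∫ ω, g ω ∂P)

/-- Strict stationarity of a real-valued process indexed by `ℤ`: for every shift `k`, the
joint law of the shifted process coincides with that of the original process. -/
def IsStrictlyStationary (P : Measure Ω) (X : ℤ → Ω → ℝ) : Prop :=
  ∀ k : ℤ, Measure.map (fun ω => fun i : ℤ => X (i + k) ω) P
    = Measure.map (fun ω => fun i : ℤ => X i ω) P

/-- The process `X` is α-mixing with coefficients `α`. -/
def IsAlphaMixingWith (P : Measure Ω) (X : ℤ → Ω → ℝ) (α : ℕ → ℝ) : Prop :=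
  ∀ q : ℕ, 1 ≤ q → ∀ t : ℤ, ∀ A B : Set Ω,
    MeasurableSet[⨆ i ∈ {i : ℤ | i ≤ t}, MeasurableSpace.comap (X i) (borel ℝ)] A →
    MeasurableSet[⨆ i ∈ {i : ℤ | t + (q : ℤ) ≤ i}, MeasurableSpace.comap (X i) (borel ℝ)] B →
    |(P (A ∩ B)).toReal - (P A).toReal * (P B).toReal| ≤ α q

/-- The process `X` is θ-weakly dependent with coefficients `θ`: for separated monotone blocks
of indices, any bounded measurable `f` of the past and any function `g` of the future that is
`L`-Lipschitz with respect to the ℓ¹-norm satisfy the covariance bound. -/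
def IsThetaWeaklyDependentWith (P : Measure Ω) (X : ℤ → Ω → ℝ) (θ : ℕ → ℝ) : Prop :=
  ∀ (u v q : ℕ), 1 ≤ u → 1 ≤ v → 1 ≤ q →
    ∀ (i : Fin u → ℤ) (j : Fin v → ℤ), Monotone i → Monotone j →
    (∀ a b, i a + (q : ℤ) ≤ j b) →
    ∀ (f : (Fin u → ℝ) → ℝ) (g : (Fin v → ℝ) → ℝ) (Mf L : ℝ),
      Measurable f → (∀ x, |f x| ≤ Mf) →
      (∀ x y, |g x - g y| ≤ L * ∑ a, |x a - y a|) →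
      |cov P (fun ω => f fun a => X (i a) ω) (fun ω => g fun b => X (j b) ω)|
        ≤ (v : ℝ) * L * Mf * θ q

/-- The common mean `m = E[X₀]`. -/
def meanX (P : Measure Ω) (X : ℤ → Ω → ℝ) : ℝ := ∫ ω, X 0 ω ∂P

/-- The long-run variance `σ² = Σ_{j ∈ ℤ} Cov(X₀, X_j)`. -/
def sigma2 (P : Measure Ω) (X : ℤ → Ω → ℝ) : ℝ := ∑' j : ℤ, cov P (X 0) (X j)

/-- Block mean `Y_i^{(n)}` over the Bernstein block `B_{i,n} = {(i-1)p+1, …, ip}`. -/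
def blockY (X : ℤ → Ω → ℝ) (p i : ℕ) (ω : Ω) : ℝ :=
  (∑ j ∈ Finset.Icc ((i - 1) * p + 1) (i * p), X (j : ℤ) ω) / p

/-- Normalized centred block sum `G_{i,n} = √p (Y_i^{(n)} − m)`. -/
def blockG (P : Measure Ω) (X : ℤ → Ω → ℝ) (p i : ℕ) (ω : Ω) : ℝ :=
  Real.sqrt p * (blockY X p i ω - meanX P X)

/-- Centred squared block sum `U_{i,n} = G_{i,n}² − E[G_{i,n}²]`. -/
def blockU (P : Measure Ω) (X : ℤ → Ω → ℝ) (p i : ℕ) (ω : Ω) : ℝ :=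
  blockG P X p i ω ^ 2 - ∫ ω', blockG P X p i ω' ^ 2 ∂P

/-- The statistic `𝒢_n = (m²√k)⁻¹ Σ_{i=1}^{k} U_{i,n}`. -/
def calG (P : Measure Ω) (X : ℤ → Ω → ℝ) (p k : ℕ) (ω : Ω) : ℝ :=
  (∑ i ∈ Finset.Icc 1 k, blockU P X p i ω) / (meanX P X ^ 2 * Real.sqrt k)

/-- The fourth joint cumulant `κ(X_a, X_b, X_c, X_d)`. -/
def cum4 (P : Measure Ω) (X : ℤ → Ω → ℝ) (a b c d : ℤ) : ℝ :=
  (∫ ω, (X a ω - meanX P X) * (X b ω - meanX P X) * (X c ω - meanX P X)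
      * (X d ω - meanX P X) ∂P)
    - cov P (X a) (X b) * cov P (X c) (X d)
    - cov P (X a) (X c) * cov P (X b) (X d)
    - cov P (X a) (X d) * cov P (X b) (X c)

/-- Condition (C): summability of the fourth cumulants
`Σ_{i,j,k=1}^∞ |κ(X₀, X_i, X_j, X_k)| < ∞`. -/
def CondC (P : Measure Ω) (X : ℤ → Ω → ℝ) : Prop :=
  Summable (fun v : ℕ × ℕ × ℕ =>
    |cum4 P X 0 ((v.1 : ℤ) + 1) ((v.2.1 : ℤ) + 1) ((v.2.2 : ℤ) + 1)|)

/-- Convergence in distribution: weak convergence of the laws of `Z n` under `P`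
to the limit measure `μLim`. -/
def TendstoInDistribution (P : Measure Ω) (Z : ℕ → Ω → ℝ) (μLim : Measure ℝ) : Prop :=
  ∀ F : BoundedContinuousFunction ℝ ℝ,
    Tendsto (fun n => ∫ ω, F (Z n ω) ∂P) atTop (𝓝 (∫ x, F x ∂μLim))

/-- Normalized centred sum `G_I = p^{-1/2} Σ_{i∈I} (X_i − m)` over the interval
`I = [a,b] ∩ ℤ`. -/
def Gint (P : Measure Ω) (X : ℤ → Ω → ℝ) (p : ℕ) (a b : ℤ) (ω : Ω) : ℝ :=
  (∑ i ∈ Finset.Icc a b, (X i ω - meanX P X)) / Real.sqrt p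

/-
The engine is Davydov's covariance inequality: if the α-mixing coefficient of `σ(ξ)` and `σ(η)`
is `a` and `‖ξ‖_s, ‖η‖_s ≤ K` with `s > 2`, then `|Cov(ξ, η)| ≤ 10 K² a^{1-2/s}`. For bounded
variables, the layer-cake formula `x = ∫₀^C (1{t < x} - 1{x < -t}) dt` writes `Cov(ξ, η)` as an
average of covariances of differences of indicators, each at most `4a`, giving `4 C₁ C₂ a`. In
general one truncates at level `M`: the bounded parts contribute `4 M² a`, and the tails, through
`E|ξ - ξ_M|^k ≤ K^s M^{k-s}` for `k = 1, 2`, contribute `6 K^s M^{2-s}`; `M = K a^{-1/s}`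
balances the two.

By stationarity and Minkowski, `‖G_I‖_r ≤ √p ‖X₀ - m‖_r`, hence `‖G_I²‖_{r/2} ≤ p ‖X₀ - m‖_r²`.
Separated intervals lie one before the other, so `G_I²` and `G_J²` are measurable with respect
to a past and a future `σ`-algebra `q` apart, and Davydov's inequality with `s = r/2` gives the
bound with exponent `1 - 2/(r/2) = (r - 4)/r`.
-/

open scoped ENNReal

section Covariance

variable {P : Measure Ω} {f g : Ω → ℝ}

lemma cov_comm : cov P f g = cov P g f := by
  simp only [cov, mul_comm]

variable [IsProbabilityMeasure P]

lemma cov_eq_covariance (hf : MemLp f 2 P) (hg : MemLp g 2 P) : cov P f g = cov[f, g; P] := by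
  rw [covariance_eq_sub hf hg]
  rfl

lemma covariance_eq_integral_mul_sub (hf : MemLp f 2 P) (hg : MemLp g 2 P) :
    cov[f, g; P] = ∫ ω, f ω * (g ω - P[g]) ∂P := by
  simp_rw [mul_sub]
  have hfg : Integrable (fun ω => f ω * g ω) P := hf.integrable_mul hg
  rw [covariance_eq_sub hf hg, integral_sub hfg ((hf.integrable one_le_two).mul_const _),
    integral_mul_const]
  rfl

lemma memLp_of_abs_le {C : ℝ} (hf : Measurable f) (hC : ∀ ω, |f ω| ≤ C) (p : ℝ≥0∞) :
    MemLp f p P :=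
  MemLp.of_bound hf.aestronglyMeasurable C (ae_of_all _ hC)

lemma covariance_indicator_one {A B : Set Ω} (hA : MeasurableSet A) (hB : MeasurableSet B) :
    cov[A.indicator 1, B.indicator 1; P] = P.real (A ∩ B) - P.real A * P.real B := by
  have hA2 : MemLp (A.indicator (1 : Ω → ℝ)) 2 P := (memLp_const 1).indicator hA
  have hB2 : MemLp (B.indicator (1 : Ω → ℝ)) 2 P := (memLp_const 1).indicator hB
  rw [covariance_eq_sub hA2 hB2, ← Set.inter_indicator_one, integral_indicator_one (hA.inter hB),
    integral_indicator_one hA, integral_indicator_one hB]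

lemma abs_covariance_add_add_le {f₁ f₂ g₁ g₂ : Ω → ℝ} (hf₁ : MemLp f₁ 2 P) (hf₂ : MemLp f₂ 2 P)
    (hg₁ : MemLp g₁ 2 P) (hg₂ : MemLp g₂ 2 P) :
    |cov[f₁ + f₂, g₁ + g₂; P]|
      ≤ |cov[f₁, g₁; P]| + |cov[f₁, g₂; P]| + |cov[f₂, g₁; P]| + |cov[f₂, g₂; P]| := by
  rw [covariance_add_left hf₁ hf₂ (hg₁.add hg₂), covariance_add_right hf₁ hg₁ hg₂,
    covariance_add_right hf₂ hg₁ hg₂, ← add_assoc]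
  linarith [abs_add_le (cov[f₁, g₁; P] + cov[f₁, g₂; P] + cov[f₂, g₁; P]) (cov[f₂, g₂; P]),
    abs_add_three (cov[f₁, g₁; P]) (cov[f₁, g₂; P]) (cov[f₂, g₁; P])]

end Covariance

def signedLayer (t x : ℝ) : ℝ := (if t < x then 1 else 0) - (if x < -t then 1 else 0)

lemma abs_signedLayer_le_one (t x : ℝ) : |signedLayer t x| ≤ 1 := by
  unfold signedLayer
  split_ifs <;> norm_num

lemma measurable_signedLayer : Measurable fun z : ℝ × ℝ => signedLayer z.1 z.2 :=
  (Measurable.ite (measurableSet_lt measurable_fst measurable_snd) measurable_const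
    measurable_const).sub
    (Measurable.ite (measurableSet_lt measurable_snd measurable_fst.neg) measurable_const
      measurable_const)

lemma signedLayer_comp {β : Type*} (t : ℝ) (ξ : β → ℝ) :
    (fun ω => signedLayer t (ξ ω))
      = (ξ ⁻¹' Set.Ioi t).indicator 1 - (ξ ⁻¹' Set.Iio (-t)).indicator 1 := by
  funext ω
  by_cases h₁ : t < ξ ω <;> by_cases h₂ : ξ ω < -t <;> simp [signedLayer, h₁, h₂]

lemma setIntegral_Ioc_indicator_Iio {y C : ℝ} (hyC : y ≤ C) :
    ∫ t in Set.Ioc 0 C, (Set.Iio y).indicator 1 t = max y 0 := by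
  have hset : Set.Iio y ∩ Set.Ioc 0 C = Set.Ioo 0 y := by
    ext t
    simp only [Set.mem_inter_iff, Set.mem_Iio, Set.mem_Ioc, Set.mem_Ioo]
    constructor
    · rintro ⟨hty, ht0, -⟩
      exact ⟨ht0, hty⟩
    · rintro ⟨ht0, hty⟩
      exact ⟨hty, ht0, hty.le.trans hyC⟩
  rw [integral_indicator_one measurableSet_Iio, measureReal_restrict_apply measurableSet_Iio,
    hset, Real.volume_real_Ioo, sub_zero]

lemma setIntegral_signedLayer {x C : ℝ} (hx : |x| ≤ C) :
    ∫ t in Set.Ioc 0 C, signedLayer t x = x := by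
  obtain ⟨hxl, hxr⟩ := abs_le.1 hx
  have hrepr : (fun t => signedLayer t x)
      = (Set.Iio x).indicator 1 - (Set.Iio (-x)).indicator 1 := by
    funext t
    simp only [signedLayer, Pi.sub_apply, Set.indicator_apply, Set.mem_Iio, Pi.one_apply,
      lt_neg]
  have hint : ∀ y, Integrable ((Set.Iio y).indicator (1 : ℝ → ℝ))
      (volume.restrict (Set.Ioc 0 C)) :=
    fun y => (integrable_const 1).indicator measurableSet_Iio
  rw [hrepr, integral_sub' (hint x) (hint (-x)), setIntegral_Ioc_indicator_Iio hxr,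
    setIntegral_Ioc_indicator_Iio (by linarith)]
  rcases le_total 0 x with h | h <;> simp [h]

lemma abs_covariance_le_of_forall_signedLayer {P : Measure Ω} [IsProbabilityMeasure P]
    {ξ η : Ω → ℝ} {B C : ℝ} (hξ : Measurable ξ) (hξC : ∀ ω, |ξ ω| ≤ C) (hη : MemLp η 2 P)
    (hB : ∀ t, |cov[fun ω => signedLayer t (ξ ω), η; P]| ≤ B) :
    |cov[ξ, η; P]| ≤ C * B := by
  have hC : 0 ≤ C := by
    obtain ⟨ω⟩ := nonempty_of_isProbabilityMeasure P
    exact (abs_nonneg _).trans (hξC ω)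
  have hlayer : ∀ t, MemLp (fun ω => signedLayer t (ξ ω)) 2 P := fun t =>
    memLp_of_abs_le (measurable_signedLayer.comp (measurable_const.prodMk hξ))
      (fun ω => abs_signedLayer_le_one _ _) 2
  have hint : Integrable (Function.uncurry fun ω t => signedLayer t (ξ ω) * (η ω - P[η]))
      (P.prod (volume.restrict (Set.Ioc 0 C))) := by
    refine Integrable.bdd_mul (c := 1)
      (((hη.integrable one_le_two).sub (integrable_const _)).comp_fst _) ?_ ?_
    · exact (measurable_signedLayer.comp (measurable_snd.prodMk
        (hξ.comp measurable_fst))).aestronglyMeasurable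
    · exact ae_of_all _ fun z => abs_signedLayer_le_one _ _
  have hcov : cov[ξ, η; P] = ∫ t in Set.Ioc 0 C, cov[fun ω => signedLayer t (ξ ω), η; P] :=
    calc cov[ξ, η; P] = ∫ ω, ξ ω * (η ω - P[η]) ∂P :=
          covariance_eq_integral_mul_sub (memLp_of_abs_le hξ hξC 2) hη
      _ = ∫ ω, (∫ t in Set.Ioc (0 : ℝ) C, signedLayer t (ξ ω) * (η ω - P[η])) ∂P := by
          congr 1
          funext ω
          rw [integral_mul_const, setIntegral_signedLayer (hξC ω)]
      _ = ∫ t in Set.Ioc (0 : ℝ) C, ∫ ω, signedLayer t (ξ ω) * (η ω - P[η]) ∂P :=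
          integral_integral_swap hint
      _ = ∫ t in Set.Ioc 0 C, cov[fun ω => signedLayer t (ξ ω), η; P] := by
          congr 1
          funext t
          rw [covariance_eq_integral_mul_sub (hlayer t) hη]
  rw [hcov, ← Real.norm_eq_abs]
  refine (norm_setIntegral_le_of_norm_le_const measure_Ioc_lt_top fun t _ => hB t).trans ?_
  rw [Real.volume_real_Ioc_of_le hC, sub_zero, mul_comm]

/-- The α-mixing coefficient of `σ(ξ)` and `σ(η)` is at most `a`. -/
def IsAlphaMixingBound (P : Measure Ω) (ξ η : Ω → ℝ) (a : ℝ) : Prop :=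
  ∀ S T : Set ℝ, MeasurableSet S → MeasurableSet T →
    |P.real (ξ ⁻¹' S ∩ η ⁻¹' T) - P.real (ξ ⁻¹' S) * P.real (η ⁻¹' T)| ≤ a

namespace IsAlphaMixingBound

variable {P : Measure Ω} {ξ η : Ω → ℝ} {a : ℝ}

lemma nonneg (h : IsAlphaMixingBound P ξ η a) : 0 ≤ a := by
  simpa using h ∅ ∅ MeasurableSet.empty MeasurableSet.empty

lemma comp (h : IsAlphaMixingBound P ξ η a) {u v : ℝ → ℝ} (hu : Measurable u)
    (hv : Measurable v) : IsAlphaMixingBound P (u ∘ ξ) (v ∘ η) a :=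
  fun _ _ hS hT => h _ _ (hu hS) (hv hT)

variable [IsProbabilityMeasure P]

lemma abs_covariance_indicator_sub_le (h : IsAlphaMixingBound P ξ η a) (hξ : Measurable ξ)
    (hη : Measurable η) {S₁ S₂ T₁ T₂ : Set ℝ} (hS₁ : MeasurableSet S₁) (hS₂ : MeasurableSet S₂)
    (hT₁ : MeasurableSet T₁) (hT₂ : MeasurableSet T₂) :
    |cov[(ξ ⁻¹' S₁).indicator 1 - (ξ ⁻¹' S₂).indicator 1,
      (η ⁻¹' T₁).indicator 1 - (η ⁻¹' T₂).indicator 1; P]| ≤ 4 * a := by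
  have hmem : ∀ {A : Set Ω}, MeasurableSet A → MemLp (A.indicator (1 : Ω → ℝ)) 2 P :=
    fun hA => (memLp_const 1).indicator hA
  rw [covariance_sub_sub (hmem (hξ hS₁)) (hmem (hξ hS₂)) (hmem (hη hT₁)) (hmem (hη hT₂)),
    covariance_indicator_one (hξ hS₁) (hη hT₁), covariance_indicator_one (hξ hS₁) (hη hT₂),
    covariance_indicator_one (hξ hS₂) (hη hT₁), covariance_indicator_one (hξ hS₂) (hη hT₂)]
  have h₁₁ := abs_le.1 (h S₁ T₁ hS₁ hT₁)
  have h₁₂ := abs_le.1 (h S₁ T₂ hS₁ hT₂)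
  have h₂₁ := abs_le.1 (h S₂ T₁ hS₂ hT₁)
  have h₂₂ := abs_le.1 (h S₂ T₂ hS₂ hT₂)
  rw [abs_le]
  constructor <;> linarith

lemma abs_covariance_le_of_abs_le (h : IsAlphaMixingBound P ξ η a) (hξ : Measurable ξ)
    (hη : Measurable η) {C₁ C₂ : ℝ} (hξC : ∀ ω, |ξ ω| ≤ C₁) (hηC : ∀ ω, |η ω| ≤ C₂) :
    |cov[ξ, η; P]| ≤ 4 * C₁ * C₂ * a := by
  have hpair : ∀ s t, |cov[fun ω => signedLayer s (ξ ω), fun ω => signedLayer t (η ω); P]|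
      ≤ 4 * a := by
    intro s t
    rw [signedLayer_comp, signedLayer_comp]
    exact h.abs_covariance_indicator_sub_le hξ hη measurableSet_Ioi measurableSet_Iio
      measurableSet_Ioi measurableSet_Iio
  have hleft : ∀ s, |cov[fun ω => signedLayer s (ξ ω), η; P]| ≤ C₂ * (4 * a) := by
    intro s
    rw [covariance_comm]
    refine abs_covariance_le_of_forall_signedLayer hη hηC
      (memLp_of_abs_le (measurable_signedLayer.comp (measurable_const.prodMk hξ))
        (fun ω => abs_signedLayer_le_one _ _) 2) fun t => ?_
    rw [covariance_comm]
    exact hpair s t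
  calc |cov[ξ, η; P]| ≤ C₁ * (C₂ * (4 * a)) :=
        abs_covariance_le_of_forall_signedLayer hξ hξC (memLp_of_abs_le hη hηC 2) hleft
    _ = 4 * C₁ * C₂ * a := by ring

end IsAlphaMixingBound

section Moments

variable {P : Measure Ω} {f g : Ω → ℝ}

lemma integrable_abs_rpow_of_memLp {s : ℝ} (hs : 0 < s) (hf : MemLp f (ENNReal.ofReal s) P) :
    Integrable (fun ω => |f ω| ^ s) P := by
  simpa [Real.norm_eq_abs, ENNReal.toReal_ofReal hs.le] using
    hf.integrable_norm_rpow (by simpa using hs) ENNReal.ofReal_ne_top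

lemma integral_abs_rpow_le_of_eLpNorm_le {s K : ℝ} (hs : 0 < s) (hK : 0 ≤ K)
    (hf : MemLp f (ENNReal.ofReal s) P)
    (hfK : eLpNorm f (ENNReal.ofReal s) P ≤ ENNReal.ofReal K) :
    ∫ ω, |f ω| ^ s ∂P ≤ K ^ s := by
  rw [hf.eLpNorm_eq_integral_rpow_norm (by simpa using hs) ENNReal.ofReal_ne_top,
    ENNReal.ofReal_le_ofReal_iff hK, ENNReal.toReal_ofReal hs.le] at hfK
  simp_rw [Real.norm_eq_abs] at hfK
  exact (Real.rpow_inv_le_iff_of_pos (integral_nonneg fun ω => by positivity) hK hs).1 hfK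

lemma eLpNorm_sq_le_of_eLpNorm_le {r C : ℝ} (hr : 0 < r) (hC : 0 ≤ C)
    (hf : eLpNorm f (ENNReal.ofReal r) P ≤ ENNReal.ofReal C) :
    eLpNorm (fun ω => f ω ^ 2) (ENNReal.ofReal (r / 2)) P ≤ ENNReal.ofReal (C ^ 2) := by
  have hsq : (fun ω => f ω ^ 2) = fun ω => ‖f ω‖ ^ (2 : ℝ) := by
    funext ω
    rw [Real.rpow_two, Real.norm_eq_abs, sq_abs]
  rw [hsq, eLpNorm_norm_rpow f two_pos, ← ENNReal.ofReal_mul (by positivity),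
    div_mul_cancel₀ r two_ne_zero, ← Real.rpow_two,
    ← ENNReal.ofReal_rpow_of_nonneg hC zero_le_two]
  exact ENNReal.rpow_le_rpow hf zero_le_two

variable [IsProbabilityMeasure P]

lemma sq_integral_le_integral_sq (hf : MemLp f 2 P) :
    (∫ ω, f ω ∂P) ^ 2 ≤ ∫ ω, f ω ^ 2 ∂P := by
  have h := variance_nonneg f P
  rw [variance_eq_sub hf] at h
  simpa using h

lemma abs_covariance_le_of_abs_le_left {M : ℝ} (hf : Measurable f) (hfM : ∀ ω, |f ω| ≤ M)
    (hg : MemLp g 2 P) : |cov[f, g; P]| ≤ 2 * M * ∫ ω, |g ω| ∂P := by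
  have hf2 : MemLp f 2 P := memLp_of_abs_le hf hfM 2
  have hprod : |∫ ω, f ω * g ω ∂P| ≤ M * ∫ ω, |g ω| ∂P := by
    rw [← integral_const_mul]
    refine abs_integral_le_integral_abs.trans (integral_mono_of_nonneg
      (ae_of_all _ fun ω => abs_nonneg _) ((hg.integrable one_le_two).abs.const_mul M)
      (ae_of_all _ fun ω => ?_))
    dsimp only
    rw [abs_mul]
    exact mul_le_mul_of_nonneg_right (hfM ω) (abs_nonneg _)
  have hmean : |∫ ω, f ω ∂P| ≤ M := by
    refine abs_integral_le_integral_abs.trans ?_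
    calc ∫ ω, |f ω| ∂P ≤ ∫ _, M ∂P :=
          integral_mono (hf2.integrable one_le_two).abs (integrable_const M) hfM
      _ = M := by simp
  rw [covariance_eq_sub hf2 hg]
  calc |P[f * g] - P[f] * P[g]| ≤ |∫ ω, f ω * g ω ∂P| + |∫ ω, f ω ∂P| * |∫ ω, g ω ∂P| := by
        rw [← abs_mul]
        exact abs_sub _ _
    _ ≤ M * ∫ ω, |g ω| ∂P + M * ∫ ω, |g ω| ∂P :=
        add_le_add hprod (mul_le_mul hmean abs_integral_le_integral_abs (abs_nonneg _)
          ((abs_nonneg _).trans hmean))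
    _ = 2 * M * ∫ ω, |g ω| ∂P := by ring

lemma abs_covariance_le_of_integral_sq_le {T : ℝ} (hf : MemLp f 2 P) (hg : MemLp g 2 P)
    (hfT : ∫ ω, f ω ^ 2 ∂P ≤ T) (hgT : ∫ ω, g ω ^ 2 ∂P ≤ T) : |cov[f, g; P]| ≤ 2 * T := by
  have hf2 : Integrable (fun ω => f ω ^ 2) P := hf.integrable_sq
  have hg2 : Integrable (fun ω => g ω ^ 2) P := hg.integrable_sq
  have hprod : |∫ ω, f ω * g ω ∂P| ≤ T := by
    refine abs_integral_le_integral_abs.trans ?_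
    calc ∫ ω, |f ω * g ω| ∂P ≤ ∫ ω, (f ω ^ 2 + g ω ^ 2) / 2 ∂P := by
          refine integral_mono_of_nonneg (ae_of_all _ fun ω => abs_nonneg _)
            ((hf2.add hg2).div_const 2) (ae_of_all _ fun ω => ?_)
          dsimp only
          rw [abs_mul]
          nlinarith [sq_nonneg (|f ω| - |g ω|), sq_abs (f ω), sq_abs (g ω)]
      _ = ((∫ ω, f ω ^ 2 ∂P) + ∫ ω, g ω ^ 2 ∂P) / 2 := by
          rw [integral_div, integral_add hf2 hg2]
      _ ≤ T := by linarith
  have hmeans : |∫ ω, f ω ∂P| * |∫ ω, g ω ∂P| ≤ T := by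
    nlinarith [sq_integral_le_integral_sq hf, sq_integral_le_integral_sq hg,
      sq_nonneg (|∫ ω, f ω ∂P| - |∫ ω, g ω ∂P|), sq_abs (∫ ω, f ω ∂P), sq_abs (∫ ω, g ω ∂P)]
  rw [covariance_eq_sub hf hg]
  calc |P[f * g] - P[f] * P[g]| ≤ |∫ ω, f ω * g ω ∂P| + |∫ ω, f ω ∂P| * |∫ ω, g ω ∂P| := by
        rw [← abs_mul]
        exact abs_sub _ _
    _ ≤ 2 * T := by linarith

end Moments

section Truncation

lemma abs_sub_truncation_pow_le {β : Type*} {M s : ℝ} (hM : 0 < M) {k : ℕ} (hk : k ≠ 0)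
    (hks : (k : ℝ) ≤ s) (f : β → ℝ) (x : β) :
    |f x - truncation f M x| ^ k ≤ |f x| ^ s * M ^ ((k : ℝ) - s) := by
  by_cases hx : f x ∈ Set.Ioc (-M) M
  · have htr : truncation f M x = f x := by simp [truncation, hx]
    rw [htr, sub_self, abs_zero, zero_pow hk]
    positivity
  · have htr : truncation f M x = 0 := by simp [truncation, hx]
    have hMx : M ≤ |f x| := by
      rw [Set.mem_Ioc, not_and_or, not_lt, not_le] at hx
      rcases hx with hx | hx
      · exact le_abs.2 (Or.inr (by linarith))
      · exact le_abs.2 (Or.inl hx.le)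
    have hx0 : 0 < |f x| := hM.trans_le hMx
    calc |f x - truncation f M x| ^ k = |f x| ^ s * |f x| ^ ((k : ℝ) - s) := by
          rw [htr, sub_zero, ← Real.rpow_add hx0, add_sub_cancel, Real.rpow_natCast]
      _ ≤ |f x| ^ s * M ^ ((k : ℝ) - s) :=
          mul_le_mul_of_nonneg_left (Real.rpow_le_rpow_of_nonpos hM hMx (by linarith))
            (by positivity)

lemma integral_abs_sub_truncation_pow_le {P : Measure Ω} {ξ : Ω → ℝ} {M s K : ℝ} (hM : 0 < M)
    {k : ℕ} (hk : k ≠ 0) (hks : (k : ℝ) ≤ s) (hξs : Integrable (fun ω => |ξ ω| ^ s) P)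
    (hξK : ∫ ω, |ξ ω| ^ s ∂P ≤ K ^ s) :
    ∫ ω, |ξ ω - truncation ξ M ω| ^ k ∂P ≤ K ^ s * M ^ ((k : ℝ) - s) :=
  calc ∫ ω, |ξ ω - truncation ξ M ω| ^ k ∂P ≤ ∫ ω, |ξ ω| ^ s * M ^ ((k : ℝ) - s) ∂P :=
        integral_mono_of_nonneg (ae_of_all _ fun ω => by positivity) (hξs.mul_const _)
          (ae_of_all _ fun ω => abs_sub_truncation_pow_le hM hk hks ξ ω)
    _ ≤ K ^ s * M ^ ((k : ℝ) - s) := by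
        rw [integral_mul_const]
        exact mul_le_mul_of_nonneg_right hξK (by positivity)

lemma integral_sub_truncation_le {P : Measure Ω} {ζ : Ω → ℝ} {M s K : ℝ} (hs : 2 ≤ s)
    (hM : 0 < M) (hζ : MemLp ζ (ENNReal.ofReal s) P) (hζK : ∫ ω, |ζ ω| ^ s ∂P ≤ K ^ s) :
    ∫ ω, |(ζ - truncation ζ M) ω| ∂P ≤ K ^ s * M ^ (1 - s) ∧
      ∫ ω, (ζ - truncation ζ M) ω ^ 2 ∂P ≤ K ^ s * M ^ (2 - s) := by
  have hζs := integrable_abs_rpow_of_memLp (by linarith) hζ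
  have h₁ := integral_abs_sub_truncation_pow_le hM one_ne_zero (by simp; linarith) hζs hζK
  have h₂ := integral_abs_sub_truncation_pow_le hM two_ne_zero (by simpa using hs) hζs hζK
  simp only [pow_one, Nat.cast_one, sq_abs, Nat.cast_ofNat] at h₁ h₂
  exact ⟨h₁, h₂⟩

end Truncation

lemma le_mul_rpow_of_forall_lt {x c a θ : ℝ} (hθ : 0 ≤ θ) (h : ∀ b, a < b → x ≤ c * b ^ θ) :
    x ≤ c * a ^ θ :=
  ge_of_tendsto (((Real.continuousAt_rpow_const a θ (Or.inr hθ)).tendsto.const_mul c).mono_left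
    nhdsWithin_le_nhds) (eventually_nhdsWithin_of_forall (s := Set.Ioi a) h)

namespace IsAlphaMixingBound

variable {P : Measure Ω} [IsProbabilityMeasure P] {ξ η : Ω → ℝ} {a : ℝ}

lemma abs_covariance_le_of_truncation (h : IsAlphaMixingBound P ξ η a) {s K M : ℝ}
    (hs : 2 ≤ s) (hM : 0 < M) (hξ : Measurable ξ) (hη : Measurable η)
    (hξs : MemLp ξ (ENNReal.ofReal s) P) (hηs : MemLp η (ENNReal.ofReal s) P)
    (hξK : ∫ ω, |ξ ω| ^ s ∂P ≤ K ^ s) (hηK : ∫ ω, |η ω| ^ s ∂P ≤ K ^ s) :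
    |cov[ξ, η; P]| ≤ 4 * M ^ 2 * a + 6 * (K ^ s * M ^ (2 - s)) := by
  have h2s : (2 : ℝ≥0∞) ≤ ENNReal.ofReal s := by
    rw [← ENNReal.ofReal_ofNat 2]
    exact ENNReal.ofReal_le_ofReal hs
  have hu : Measurable (Set.indicator (Set.Ioc (-M) M) id) :=
    measurable_id.indicator measurableSet_Ioc
  have hbdd : ∀ (ζ : Ω → ℝ) ω, |truncation ζ M ω| ≤ M := fun ζ ω =>
    (abs_truncation_le_bound ζ M ω).trans (abs_of_pos hM).le
  have hMT : M * (K ^ s * M ^ (1 - s)) = K ^ s * M ^ (2 - s) := by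
    rw [mul_left_comm, show (2 : ℝ) - s = 1 + (1 - s) by ring, Real.rpow_add hM, Real.rpow_one]
  obtain ⟨hξ₁, hξ₂⟩ := integral_sub_truncation_le hs hM hξs hξK
  obtain ⟨hη₁, hη₂⟩ := integral_sub_truncation_le hs hM hηs hηK
  have hξt : MemLp (truncation ξ M) 2 P := memLp_of_abs_le (hu.comp hξ) (hbdd ξ) 2
  have hηt : MemLp (truncation η M) 2 P := memLp_of_abs_le (hu.comp hη) (hbdd η) 2
  have hξr : MemLp (ξ - truncation ξ M) 2 P := (hξs.mono_exponent h2s).sub hξt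
  have hηr : MemLp (η - truncation η M) 2 P := (hηs.mono_exponent h2s).sub hηt
  have hbb : |cov[truncation ξ M, truncation η M; P]| ≤ 4 * M ^ 2 * a := by
    rw [sq, ← mul_assoc]
    exact (h.comp hu hu).abs_covariance_le_of_abs_le (hu.comp hξ) (hu.comp hη) (hbdd ξ) (hbdd η)
  have hbt : |cov[truncation ξ M, η - truncation η M; P]| ≤ 2 * (K ^ s * M ^ (2 - s)) := by
    refine (abs_covariance_le_of_abs_le_left (hu.comp hξ) (hbdd ξ) hηr).trans ?_
    rw [← hMT, mul_assoc]
    exact mul_le_mul_of_nonneg_left (mul_le_mul_of_nonneg_left hη₁ hM.le) zero_le_two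
  have htb : |cov[ξ - truncation ξ M, truncation η M; P]| ≤ 2 * (K ^ s * M ^ (2 - s)) := by
    rw [covariance_comm]
    refine (abs_covariance_le_of_abs_le_left (hu.comp hη) (hbdd η) hξr).trans ?_
    rw [← hMT, mul_assoc]
    exact mul_le_mul_of_nonneg_left (mul_le_mul_of_nonneg_left hξ₁ hM.le) zero_le_two
  have htt : |cov[ξ - truncation ξ M, η - truncation η M; P]| ≤ 2 * (K ^ s * M ^ (2 - s)) :=
    abs_covariance_le_of_integral_sq_le hξr hηr hξ₂ hη₂
  have hsplit := abs_covariance_add_add_le hξt hξr hηt hηr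
  rw [add_sub_cancel, add_sub_cancel] at hsplit
  linarith

/-- Davydov's covariance inequality. -/
theorem abs_covariance_le (h : IsAlphaMixingBound P ξ η a) {s K : ℝ} (hs : 2 < s) (hK : 0 < K)
    (hξ : Measurable ξ) (hη : Measurable η)
    (hξK : eLpNorm ξ (ENNReal.ofReal s) P ≤ ENNReal.ofReal K)
    (hηK : eLpNorm η (ENNReal.ofReal s) P ≤ ENNReal.ofReal K) :
    |cov[ξ, η; P]| ≤ 10 * K ^ 2 * a ^ (1 - 2 / s) := by
  have hs0 : 0 < s := by linarith
  have hξs : MemLp ξ (ENNReal.ofReal s) P :=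
    ⟨hξ.aestronglyMeasurable, hξK.trans_lt ENNReal.ofReal_lt_top⟩
  have hηs : MemLp η (ENNReal.ofReal s) P :=
    ⟨hη.aestronglyMeasurable, hηK.trans_lt ENNReal.ofReal_lt_top⟩
  refine le_mul_rpow_of_forall_lt (sub_nonneg.2 ((div_le_one hs0).2 hs.le)) fun b hab => ?_
  have hb : 0 < b := h.nonneg.trans_lt hab
  -- the truncation level at which the bounded part and the tails contribute equally
  set M := K * b ^ (-s⁻¹)
  have hM : 0 < M := by positivity
  have hMb : M ^ 2 * b = K ^ 2 * b ^ (1 - 2 / s) := by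
    rw [mul_pow, ← Real.rpow_natCast (b ^ _), ← Real.rpow_mul hb.le, mul_assoc,
      ← Real.rpow_add_one hb.ne']
    congr 2
    push_cast
    ring
  have hT : K ^ s * M ^ (2 - s) = K ^ 2 * b ^ (1 - 2 / s) := by
    rw [Real.mul_rpow hK.le (by positivity), ← Real.rpow_mul hb.le, ← mul_assoc,
      ← Real.rpow_add hK, add_sub_cancel, Real.rpow_two]
    congr 2
    field_simp
    ring
  calc |cov[ξ, η; P]| ≤ 4 * M ^ 2 * a + 6 * (K ^ s * M ^ (2 - s)) :=
        h.abs_covariance_le_of_truncation hs.le hM hξ hη hξs hηs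
          (integral_abs_rpow_le_of_eLpNorm_le hs0 hK.le hξs hξK)
          (integral_abs_rpow_le_of_eLpNorm_le hs0 hK.le hηs hηK)
    _ ≤ 4 * (M ^ 2 * b) + 6 * (K ^ s * M ^ (2 - s)) := by
        linarith [mul_le_mul_of_nonneg_left hab.le (sq_nonneg M)]
    _ = 10 * K ^ 2 * b ^ (1 - 2 / s) := by
        rw [hMb, hT]
        ring

end IsAlphaMixingBound

lemma exists_separating_point_Icc {a b e f : ℤ} {q : ℕ} (hq : 1 ≤ q)
    (hsep : ∀ i ∈ Finset.Icc a b, ∀ j ∈ Finset.Icc e f, (q : ℤ) ≤ |i - j|) :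
    (∃ t : ℤ, (∀ i ∈ Finset.Icc a b, i ≤ t) ∧ ∀ j ∈ Finset.Icc e f, t + q ≤ j) ∨
      ∃ t : ℤ, (∀ j ∈ Finset.Icc e f, j ≤ t) ∧ ∀ i ∈ Finset.Icc a b, t + q ≤ i := by
  simp only [Finset.mem_Icc, le_abs] at hsep ⊢
  rcases lt_or_ge b a with hba | hab
  · exact Or.inl ⟨e - q, fun i hi => by omega, fun j hj => by omega⟩
  rcases lt_or_ge f e with hfe | hef
  · exact Or.inl ⟨b, fun i hi => hi.2, fun j hj => by omega⟩
  rcases le_or_gt (b + q) e with hbe | hbe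
  · exact Or.inl ⟨b, fun i hi => hi.2, fun j hj => hbe.trans hj.1⟩
  rcases le_or_gt (f + q) a with hfa | hfa
  · exact Or.inr ⟨f, fun j hj => hj.2, fun i hi => hfa.trans hi.1⟩
  -- otherwise the two nonempty intervals would overlap
  have hbe' := hsep b ⟨hab, le_rfl⟩ e ⟨le_rfl, hef⟩
  have hfa' := hsep a ⟨le_rfl, hab⟩ f ⟨hef, le_rfl⟩
  rcases le_total a e with hae | hea
  · have := hsep e ⟨hae, by omega⟩ e ⟨le_rfl, hef⟩
    omega
  · have := hsep a ⟨le_rfl, hab⟩ a ⟨hea, by omega⟩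
    omega

section BlockSums

variable {P : Measure Ω} {X : ℤ → Ω → ℝ}

lemma IsStrictlyStationary.identDistrib (h : IsStrictlyStationary P X)
    (hX : ∀ i, Measurable (X i)) (i : ℤ) : IdentDistrib (X i) (X 0) P P where
  aemeasurable_fst := (hX i).aemeasurable
  aemeasurable_snd := (hX 0).aemeasurable
  map_eq := by
    have h0 := congrArg (Measure.map fun x : ℤ → ℝ => x 0) (h i)
    rw [Measure.map_map (measurable_pi_apply 0) (measurable_pi_lambda _ fun j => hX _),
      Measure.map_map (measurable_pi_apply 0) (measurable_pi_lambda _ hX)] at h0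
    simpa only [Function.comp_def, zero_add] using h0

lemma IsAlphaMixingWith.isAlphaMixingBound {α : ℕ → ℝ} (h : IsAlphaMixingWith P X α) {q : ℕ}
    (hq : 1 ≤ q) {t : ℤ} {ξ η : Ω → ℝ}
    (hξ : Measurable[⨆ i ∈ {i : ℤ | i ≤ t}, MeasurableSpace.comap (X i) (borel ℝ)] ξ)
    (hη : Measurable[⨆ i ∈ {i : ℤ | t + (q : ℤ) ≤ i}, MeasurableSpace.comap (X i) (borel ℝ)] η) :
    IsAlphaMixingBound P ξ η (α q) :=
  fun _ _ hS hT => h q hq t _ _ (hξ hS) (hη hT)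

lemma measurable_Gint (hX : ∀ i, Measurable (X i)) (p : ℕ) (a b : ℤ) :
    Measurable (Gint P X p a b) :=
  (Finset.measurable_sum _ fun i _ => (hX i).sub_const _).div_const _

lemma measurable_Gint_of_forall_mem {S : Set ℤ} {p : ℕ} {a b : ℤ}
    (hS : ∀ i ∈ Finset.Icc a b, i ∈ S) :
    Measurable[⨆ i ∈ S, MeasurableSpace.comap (X i) (borel ℝ)] (Gint P X p a b) :=
  (Finset.measurable_sum _ fun i hi =>
    (measurable_iff_comap_le.2 (le_iSup₂ (f := fun i (_ : i ∈ S) =>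
      MeasurableSpace.comap (X i) (borel ℝ)) i (hS i hi))).sub_const _).div_const _

lemma eLpNorm_Gint_le (hX : ∀ i, Measurable (X i)) (hstat : IsStrictlyStationary P X)
    {r K : ℝ} (hr : 1 ≤ r)
    (hK : eLpNorm (fun ω => X 0 ω - meanX P X) (ENNReal.ofReal r) P ≤ ENNReal.ofReal K)
    {p : ℕ} {a b : ℤ} (hcard : (Finset.Icc a b).card ≤ p) :
    eLpNorm (Gint P X p a b) (ENNReal.ofReal r) P ≤ ENNReal.ofReal (Real.sqrt p * K) := by
  have hsum : Gint P X p a b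
      = (Real.sqrt p)⁻¹ • ∑ i ∈ Finset.Icc a b, fun ω => X i ω - meanX P X := by
    funext ω
    simp only [Gint, Pi.smul_apply, Finset.sum_apply, smul_eq_mul, div_eq_inv_mul]
  have hterm : ∀ i, eLpNorm (fun ω => X i ω - meanX P X) (ENNReal.ofReal r) P
      ≤ ENNReal.ofReal K := fun i =>
    (((hstat.identDistrib hX i).comp (measurable_id.sub_const (meanX P X))).eLpNorm_eq
      _).trans_le hK
  calc eLpNorm (Gint P X p a b) (ENNReal.ofReal r) P
      ≤ ‖(Real.sqrt p)⁻¹‖ₑ * ∑ i ∈ Finset.Icc a b, ENNReal.ofReal K := by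
        rw [hsum, eLpNorm_const_smul]
        gcongr
        exact (eLpNorm_sum_le (fun i _ => ((hX i).sub_const _).aestronglyMeasurable)
          (ENNReal.one_le_ofReal.2 hr)).trans (Finset.sum_le_sum fun i _ => hterm i)
    _ ≤ ENNReal.ofReal (Real.sqrt p)⁻¹ * (ENNReal.ofReal p * ENNReal.ofReal K) := by
        rw [Finset.sum_const, nsmul_eq_mul, Real.enorm_of_nonneg (by positivity),
          ENNReal.ofReal_natCast]
        gcongr
    _ = ENNReal.ofReal (Real.sqrt p * K) := by
        rw [← ENNReal.ofReal_mul (by positivity), ← ENNReal.ofReal_mul (by positivity),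
          ← mul_assoc, inv_mul_eq_div, Real.div_sqrt]

lemma abs_cov_sq_Gint_le_of_separated [IsProbabilityMeasure P] (hX : ∀ i, Measurable (X i))
    (hstat : IsStrictlyStationary P X) {α : ℕ → ℝ} (hmix : IsAlphaMixingWith P X α)
    {r K : ℝ} (hr : 4 < r) (hK : 0 < K)
    (hXK : eLpNorm (fun ω => X 0 ω - meanX P X) (ENNReal.ofReal r) P ≤ ENNReal.ofReal K)
    {p q : ℕ} (hp : 1 ≤ p) (hq : 1 ≤ q) {a b e f t : ℤ}
    (hI : (Finset.Icc a b).card ≤ p) (hJ : (Finset.Icc e f).card ≤ p)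
    (hIt : ∀ i ∈ Finset.Icc a b, i ≤ t) (hJt : ∀ j ∈ Finset.Icc e f, t + q ≤ j) :
    |cov P (fun ω => Gint P X p a b ω ^ 2) (fun ω => Gint P X p e f ω ^ 2)|
      ≤ 10 * K ^ 4 * (p : ℝ) ^ 2 * α q ^ ((r - 4) / r) := by
  have hp0 : (0 : ℝ) < p := by exact_mod_cast hp
  have hnorm : ∀ {c d : ℤ}, (Finset.Icc c d).card ≤ p →
      eLpNorm (fun ω => Gint P X p c d ω ^ 2) (ENNReal.ofReal (r / 2)) P
        ≤ ENNReal.ofReal (p * K ^ 2) := fun hcd => by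
    have := eLpNorm_sq_le_of_eLpNorm_le (by linarith) (by positivity)
      (eLpNorm_Gint_le hX hstat (by linarith) hXK hcd)
    rwa [mul_pow, Real.sq_sqrt p.cast_nonneg] at this
  have hL2 : ∀ {c d : ℤ}, (Finset.Icc c d).card ≤ p →
      MemLp (fun ω => Gint P X p c d ω ^ 2) 2 P := fun hcd =>
    MemLp.mono_exponent ⟨((measurable_Gint hX p _ _).pow_const 2).aestronglyMeasurable,
      (hnorm hcd).trans_lt ENNReal.ofReal_lt_top⟩
      (by rw [← ENNReal.ofReal_ofNat 2]; exact ENNReal.ofReal_le_ofReal (by linarith))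
  have hmixIJ : IsAlphaMixingBound P (fun ω => Gint P X p a b ω ^ 2)
      (fun ω => Gint P X p e f ω ^ 2) (α q) :=
    hmix.isAlphaMixingBound hq ((measurable_Gint_of_forall_mem hIt).pow_const 2)
      ((measurable_Gint_of_forall_mem hJt).pow_const 2)
  rw [cov_eq_covariance (hL2 hI) (hL2 hJ)]
  refine (hmixIJ.abs_covariance_le (by linarith) (by positivity)
    ((measurable_Gint hX p a b).pow_const 2) ((measurable_Gint hX p e f).pow_const 2)
    (hnorm hI) (hnorm hJ)).trans_eq ?_
  rw [show 1 - 2 / (r / 2) = (r - 4) / r by field_simp; ring]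
  ring

end BlockSums

theorem stmt13_general
    (P : Measure Ω) [IsProbabilityMeasure P]
    (X : ℤ → Ω → ℝ) (hXmeas : ∀ i, Measurable (X i))
    (hstat : IsStrictlyStationary P X)
    (r : ℝ) (hr : 4 < r)
    (hmom : Integrable (fun ω => |X 0 ω| ^ r) P)
    (α : ℕ → ℝ)
    (hmix : IsAlphaMixingWith P X α) :
    ∃ c : ℝ, 0 < c ∧ ∀ (p q : ℕ), 1 ≤ p → 1 ≤ q → ∀ a b e f : ℤ,
      (Finset.Icc a b).card ≤ p → (Finset.Icc e f).card ≤ p →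
      (∀ i ∈ Finset.Icc a b, ∀ j ∈ Finset.Icc e f, (q : ℤ) ≤ |i - j|) →
      |cov P (fun ω => Gint P X p a b ω ^ 2) (fun ω => Gint P X p e f ω ^ 2)|
        ≤ c * (p : ℝ) ^ 2 * α q ^ ((r - 4) / r) := by
  have hr0 : 0 < r := by linarith
  have hX0 : MemLp (fun ω => X 0 ω - meanX P X) (ENNReal.ofReal r) P := by
    refine MemLp.sub ((integrable_norm_rpow_iff (hXmeas 0).aestronglyMeasurable
      (by simpa using hr0) ENNReal.ofReal_ne_top).1 ?_) (memLp_const _)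
    simpa [Real.norm_eq_abs, ENNReal.toReal_ofReal hr0.le] using hmom
  set K := (eLpNorm (fun ω => X 0 ω - meanX P X) (ENNReal.ofReal r) P).toReal + 1
  have hK : 0 < K := by positivity
  have hXK : eLpNorm (fun ω => X 0 ω - meanX P X) (ENNReal.ofReal r) P ≤ ENNReal.ofReal K :=
    (ENNReal.le_ofReal_iff_toReal_le hX0.eLpNorm_ne_top hK.le).2 (le_add_of_nonneg_right one_pos.le)
  refine ⟨10 * K ^ 4, by positivity, fun p q hp hq a b e f hI hJ hsep => ?_⟩
  rcases exists_separating_point_Icc hq hsep with ⟨t, hIt, hJt⟩ | ⟨t, hJt, hIt⟩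
  · exact abs_cov_sq_Gint_le_of_separated hXmeas hstat hmix hr hK hXK hp hq hI hJ hIt hJt
  · rw [cov_comm]
    exact abs_cov_sq_Gint_le_of_separated hXmeas hstat hmix hr hK hXK hp hq hJ hI hJt hIt

/-- Lemma: covariance bound for squared block sums, α-mixing case. -/
theorem stmt13
    (P : Measure Ω) [IsProbabilityMeasure P]
    (X : ℤ → Ω → ℝ) (hXmeas : ∀ i, Measurable (X i))
    (hstat : IsStrictlyStationary P X)
    (r : ℝ) (hr : 4 < r)
    (hmom : Integrable (fun ω => |X 0 ω| ^ r) P)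
    (α : ℕ → ℝ) (hα0 : ∀ j, 0 ≤ α j)
    (hmix : IsAlphaMixingWith P X α) :
    ∃ c : ℝ, 0 < c ∧ ∀ (p q : ℕ), 1 ≤ p → 1 ≤ q → ∀ a b e f : ℤ,
      (Finset.Icc a b).card ≤ p → (Finset.Icc e f).card ≤ p →
      (∀ i ∈ Finset.Icc a b, ∀ j ∈ Finset.Icc e f, (q : ℤ) ≤ |i - j|) →
      |cov P (fun ω => Gint P X p a b ω ^ 2) (fun ω => Gint P X p e f ω ^ 2)|
        ≤ c * (p : ℝ) ^ 2 * α q ^ ((r - 4) / r) :=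
  stmt13_general P X hXmeas hstat r hr hmom α hmix
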